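/- Let r > 0 and let f : ℂ → A be holomorphic on the strip S_r, 2π-periodic on S_r, and bounded on S_r with ‖f(z)‖ ≤ M for all z ∈ S_r. Then for every r' with 0 < r' < r and every m ∈ ℤ, the Fourier coefficients decay exponentially: ‖(1/(2π)) ∫_0^{2π} e^{-imt} • f(t) dt‖ ≤ M · e^{-|m| r'}. -/

import Mathlib

open MeasureTheory intervalIntegral Complex Set
open scoped Interval

/-!
Multiplying `f` by `e^{-imz}` keeps it holomorphic and `2π`-periodic. By Cauchy's theorem on the
rectangle `[0, 2π] × [0, y]`, whose vertical sides cancel by periodicity, the coefficient integral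
may be taken over the line `Im z = y` instead of the real axis. There `‖e^{-imz}‖ = e^{my}`, and
choosing `y = -sign(m) r'` gives the bound `M e^{-|m| r'}`.
-/

theorem integral_add_mul_I_eq_of_periodic {E : Type*} [NormedAddCommGroup E] [NormedSpace ℂ E]
    {g : ℂ → E} {T y : ℝ} (hg : DifferentiableOn ℂ g (im ⁻¹' [[0, y]]))
    (hper : ∀ z : ℂ, z.im ∈ [[0, y]] → g (z + T) = g z) :
    ∫ x in (0 : ℝ)..T, g (x + y * I) = ∫ x in (0 : ℝ)..T, g x := by
  have hrect := integral_boundary_rect_eq_zero_of_differentiableOn g 0 (T + y * I)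
    (hg.mono fun z hz => by simpa using hz.2)
  have hvert : ∫ t in (0 : ℝ)..y, g (T + t * I) = ∫ t in (0 : ℝ)..y, g (t * I) :=
    integral_congr fun t ht => by
      simpa [add_comm] using hper (t * I) (by simpa using ht)
  simp only [zero_re, zero_im, add_re, add_im, ofReal_re, ofReal_im, mul_re, mul_im, I_re, I_im,
    ofReal_zero, zero_mul, add_zero, mul_zero, sub_zero, mul_one, zero_add] at hrect
  rw [hvert, add_sub_cancel_right, sub_eq_zero] at hrect
  exact hrect.symm

theorem norm_exp_neg_int_mul_mul_I (m : ℤ) (z : ℂ) :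
    ‖exp (-(m : ℂ) * z * I)‖ = Real.exp (m * z.im) := by
  rw [norm_exp]
  congr 1
  simp

theorem exp_neg_int_mul_add_two_pi_mul_I (m : ℤ) (z : ℂ) :
    exp (-(m : ℂ) * (z + 2 * Real.pi) * I) = exp (-(m : ℂ) * z * I) := by
  have : -(m : ℂ) * (z + 2 * Real.pi) * I = -(m : ℂ) * z * I + (-m : ℤ) * (2 * Real.pi * I) := by
    push_cast
    ring
  rw [this, exp_add, exp_int_mul_two_pi_mul_I, mul_one]

theorem norm_fourierCoeff_le_of_abs_im_lt {A : Type*} [NormedAddCommGroup A] [NormedSpace ℂ A]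
    {r : ℝ} {f : ℂ → A} (hf : DifferentiableOn ℂ f {z : ℂ | |z.im| < r})
    (hper : ∀ z : ℂ, |z.im| < r → f (z + 2 * Real.pi) = f z)
    {M : ℝ} (hM : ∀ z : ℂ, |z.im| < r → ‖f z‖ ≤ M) (m : ℤ) {y : ℝ} (hy : |y| < r) :
    ‖(2 * (Real.pi : ℂ))⁻¹ • ∫ t in (0 : ℝ)..(2 * Real.pi), exp (-(m : ℂ) * t * I) • f t‖
      ≤ M * Real.exp (m * y) := by
  set g : ℂ → A := fun z => exp (-(m : ℂ) * z * I) • f z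
  have hband : im ⁻¹' [[0, y]] ⊆ {z : ℂ | |z.im| < r} := fun z hz =>
    (by simpa using abs_sub_left_of_mem_uIcc hz : |z.im| ≤ |y|).trans_lt hy
  have hshift : ∫ x in (0 : ℝ)..(2 * Real.pi), g (x + y * I)
      = ∫ x in (0 : ℝ)..(2 * Real.pi), g x := by
    refine integral_add_mul_I_eq_of_periodic ?_ fun z hz => ?_
    · exact ((differentiable_exp.comp (by fun_prop)).differentiableOn.smul hf).mono hband
    · push_cast
      simp only [g, exp_neg_int_mul_add_two_pi_mul_I, hper z (hband hz)]
  have hline : ∀ x ∈ Ι (0 : ℝ) (2 * Real.pi), ‖g (x + y * I)‖ ≤ M * Real.exp (m * y) := by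
    intro x _
    have him : ((x : ℂ) + y * I).im = y := by simp
    rw [norm_smul, norm_exp_neg_int_mul_mul_I, him, mul_comm]
    exact mul_le_mul_of_nonneg_right (hM _ (by rwa [him])) (Real.exp_nonneg _)
  have hpi : ‖(2 * (Real.pi : ℂ))⁻¹‖ = (2 * Real.pi)⁻¹ := by
    rw [norm_inv, norm_mul, norm_real, Real.norm_of_nonneg Real.pi_pos.le, RCLike.norm_two]
  calc ‖(2 * (Real.pi : ℂ))⁻¹ • ∫ x in (0 : ℝ)..(2 * Real.pi), g x‖
      = (2 * Real.pi)⁻¹ * ‖∫ x in (0 : ℝ)..(2 * Real.pi), g (x + y * I)‖ := by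
        rw [norm_smul, hpi, hshift]
    _ ≤ (2 * Real.pi)⁻¹ * (M * Real.exp (m * y) * |2 * Real.pi - 0|) := by
        gcongr
        exact norm_integral_le_of_norm_le_const hline
    _ = M * Real.exp (m * y) := by
        rw [sub_zero, abs_of_pos Real.two_pi_pos]
        field_simp

theorem norm_fourierCoeff_le_exp_decay_general
    {A : Type*} [NormedAddCommGroup A] [NormedSpace ℂ A]
    (r : ℝ) (f : ℂ → A)
    (hf : DifferentiableOn ℂ f {z : ℂ | |z.im| < r})
    (hper : ∀ z : ℂ, |z.im| < r → f (z + 2 * Real.pi) = f z)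
    (M : ℝ) (hM : ∀ z : ℂ, |z.im| < r → ‖f z‖ ≤ M)
    (r' : ℝ) (hr'0 : 0 < r') (hr'r : r' < r) (m : ℤ) :
    ‖(2 * (Real.pi : ℂ))⁻¹ •
        ∫ t in (0 : ℝ)..(2 * Real.pi),
          Complex.exp (-(m : ℂ) * (t : ℂ) * Complex.I) • f (t : ℂ)‖
      ≤ M * Real.exp (-(|m| : ℝ) * r') := by
  have hy : |-(Int.sign m : ℝ) * r'| < r := by
    rw [abs_mul, abs_neg, abs_of_pos hr'0]
    refine lt_of_le_of_lt (mul_le_of_le_one_left hr'0.le ?_) hr'r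
    rcases Int.sign_trichotomy m with h | h | h <;> simp [h]
  have hexp : (m : ℝ) * (-(Int.sign m : ℝ) * r') = -(|m| : ℝ) * r' := by
    rw [← Int.cast_abs, ← Int.sign_mul_self_eq_abs]
    push_cast
    ring
  simpa only [hexp] using norm_fourierCoeff_le_of_abs_im_lt hf hper hM m hy

/-- **Exponential decay of Fourier coefficients of periodic holomorphic functions.**
Let `A` be a complex Banach space, `r > 0`, and let `f : ℂ → A` be holomorphic on the
strip `S_r = {z : |Im z| < r}`, `2π`-periodic on `S_r`, and bounded by `M` on `S_r`.
Then for every `0 < r' < r` and every `m ∈ ℤ`,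
`‖(1/(2π)) ∫_0^{2π} e^{-imt} • f(t) dt‖ ≤ M · e^{-|m| r'}`. -/
theorem norm_fourierCoeff_le_exp_decay
    {A : Type*} [NormedAddCommGroup A] [NormedSpace ℂ A] [CompleteSpace A]
    (r : ℝ) (hr : 0 < r) (f : ℂ → A)
    (hf : DifferentiableOn ℂ f {z : ℂ | |z.im| < r})
    (hper : ∀ z : ℂ, |z.im| < r → f (z + 2 * Real.pi) = f z)
    (M : ℝ) (hM : ∀ z : ℂ, |z.im| < r → ‖f z‖ ≤ M)
    (r' : ℝ) (hr'0 : 0 < r') (hr'r : r' < r) (m : ℤ) :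
    ‖(2 * (Real.pi : ℂ))⁻¹ •
        ∫ t in (0 : ℝ)..(2 * Real.pi),
          Complex.exp (-(m : ℂ) * (t : ℂ) * Complex.I) • f (t : ℂ)‖
      ≤ M * Real.exp (-(|m| : ℝ) * r') :=
  norm_fourierCoeff_le_exp_decay_general r f hf hper M hM r' hr'0 hr'r m
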